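/- arXiv:2603.04015 — 3 statements merged into one kernel-verified Lean document; each statement's English description precedes it below -/
import Mathlib

section
/- For any k-fold iterate of the operator for production rules: an element ⟦t⃗⟧ρ lies in the i-th component of φᵏ(∅⃗) if and only if the first-order formula P_i^{(k)}(t⃗), the k-fold syntactic unfolding of the inductive predicate P_i, holds in M under ρ. -/
/-! ### First-order logic with inductively defined predicates (FOL_ID) -/

/-- A first-order signature with ordinary and inductive predicate symbols. -/
structure Signature : Type 1 where
  Func : Type
  arF : Func → ℕ
  Pred : Type
  arP : Pred → ℕ
  IndPred : Type
  arI : IndPred → ℕ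

/-- Terms over a signature. -/
inductive Tm (S : Signature) : Type
  | var : ℕ → Tm S
  | func (f : S.Func) : (Fin (S.arF f) → Tm S) → Tm S

/-- Formulas of FOL_ID. -/
inductive Fm (S : Signature) : Type
  | fals : Fm S
  | eq : Tm S → Tm S → Fm S
  | pred (Q : S.Pred) : (Fin (S.arP Q) → Tm S) → Fm S
  | ind (P : S.IndPred) : (Fin (S.arI P) → Tm S) → Fm S
  | not : Fm S → Fm S
  | and : Fm S → Fm S → Fm S
  | or : Fm S → Fm S → Fm S
  | imp : Fm S → Fm S → Fm S
  | all : ℕ → Fm S → Fm S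
  | ex : ℕ → Fm S → Fm S

/-- A first-order structure for a signature. -/
structure Struc (S : Signature) : Type 1 where
  U : Type
  interpF (f : S.Func) : (Fin (S.arF f) → U) → U
  interpP (Q : S.Pred) : Set (Fin (S.arP Q) → U)
  interpI : Set ((P : S.IndPred) × (Fin (S.arI P) → U))

/-- Evaluation of terms. -/
def Tm.eval {S : Signature} (M : Struc S) (ρ : ℕ → M.U) : Tm S → M.U
  | .var n => ρ n
  | .func f ts => M.interpF f (fun i => (ts i).eval M ρ)

/-- Update of a variable assignment. -/
def update {α : Type} (ρ : ℕ → α) (n : ℕ) (a : α) : ℕ → α :=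
  fun m => if m = n then a else ρ m

/-- Tarskian satisfaction. -/
def Sat {S : Signature} (M : Struc S) (ρ : ℕ → M.U) : Fm S → Prop
  | .fals => False
  | .eq t u => t.eval M ρ = u.eval M ρ
  | .pred Q ts => (fun i => (ts i).eval M ρ) ∈ M.interpP Q
  | .ind P ts => ⟨P, fun i => (ts i).eval M ρ⟩ ∈ M.interpI
  | .not A => ¬ Sat M ρ A
  | .and A B => Sat M ρ A ∧ Sat M ρ B
  | .or A B => Sat M ρ A ∨ Sat M ρ B
  | .imp A B => Sat M ρ A → Sat M ρ B
  | .all n A => ∀ a : M.U, Sat M (update ρ n a) A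
  | .ex n A => ∃ a : M.U, Sat M (update ρ n a) A

/-- Free variables of a term. -/
def Tm.fv {S : Signature} : Tm S → Finset ℕ
  | .var n => {n}
  | .func _ ts => Finset.univ.biUnion (fun i => (ts i).fv)

/-- Free variables of a formula. -/
def Fm.fv {S : Signature} : Fm S → Finset ℕ
  | .fals => ∅
  | .eq t u => t.fv ∪ u.fv
  | .pred _ ts => Finset.univ.biUnion (fun i => (ts i).fv)
  | .ind _ ts => Finset.univ.biUnion (fun i => (ts i).fv)
  | .not A => A.fv
  | .and A B => A.fv ∪ B.fv
  | .or A B => A.fv ∪ B.fv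
  | .imp A B => A.fv ∪ B.fv
  | .all n A => A.fv.erase n
  | .ex n A => A.fv.erase n

/-- Simultaneous substitution on terms. -/
def Tm.subst {S : Signature} (σ : ℕ → Tm S) : Tm S → Tm S
  | .var n => σ n
  | .func f ts => .func f (fun i => (ts i).subst σ)

/-- Substitution of a (closed) term for a variable in a formula. -/
def Fm.substC {S : Signature} (x : ℕ) (t : Tm S) : Fm S → Fm S
  | .fals => .fals
  | .eq a b => .eq (a.subst (fun n => if n = x then t else .var n))
      (b.subst (fun n => if n = x then t else .var n))
  | .pred Q ts => .pred Q (fun i => (ts i).subst (fun n => if n = x then t else .var n))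
  | .ind P ts => .ind P (fun i => (ts i).subst (fun n => if n = x then t else .var n))
  | .not A => .not (A.substC x t)
  | .and A B => .and (A.substC x t) (B.substC x t)
  | .or A B => .or (A.substC x t) (B.substC x t)
  | .imp A B => .imp (A.substC x t) (B.substC x t)
  | .all n A => if n = x then .all n A else .all n (A.substC x t)
  | .ex n A => if n = x then .ex n A else .ex n (A.substC x t)

/-- A production rule for inductive predicates. -/
structure ProdRule (S : Signature) : Type where
  concl : S.IndPred
  conclArgs : Fin (S.arI concl) → Tm S
  ordPrems : List ((Q : S.Pred) × (Fin (S.arP Q) → Tm S))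
  indPrems : List ((P : S.IndPred) × (Fin (S.arI P) → Tm S))

/-- The monotone operator determined by a set of production rules over a structure. -/
def step {S : Signature} (M : Struc S) (Φ : List (ProdRule S))
    (X : Set ((P : S.IndPred) × (Fin (S.arI P) → M.U))) :
    Set ((P : S.IndPred) × (Fin (S.arI P) → M.U)) :=
  { v | ∃ r ∈ Φ, ∃ ρ : ℕ → M.U,
      (∀ q ∈ r.ordPrems, (fun i => (q.2 i).eval M ρ) ∈ M.interpP q.1) ∧
      (∀ p ∈ r.indPrems, ⟨p.1, fun i => (p.2 i).eval M ρ⟩ ∈ X) ∧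
      v = ⟨r.concl, fun i => (r.conclArgs i).eval M ρ⟩ }

theorem step_mono {S : Signature} (M : Struc S) (Φ : List (ProdRule S)) :
    Monotone (step M Φ) := by
  rintro X Y h v ⟨r, hr, ρ, hq, hp, hv⟩
  exact ⟨r, hr, ρ, hq, fun p hp' => h (hp p hp'), hv⟩

/-- The operator for the production rules, as an order homomorphism. -/
def stepHom {S : Signature} (M : Struc S) (Φ : List (ProdRule S)) :
    Set ((P : S.IndPred) × (Fin (S.arI P) → M.U)) →o
      Set ((P : S.IndPred) × (Fin (S.arI P) → M.U)) :=
  ⟨step M Φ, step_mono M Φ⟩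

/-- A structure is a standard model for `(S, Φ)` if it interprets the inductive
predicates by the least fixpoint of the operator for `Φ`. -/
def Standard {S : Signature} (M : Struc S) (Φ : List (ProdRule S)) : Prop :=
  M.interpI = OrderHom.lfp (stepHom M Φ)

/-- The variables occurring in a production rule. -/
def ProdRule.vars {S : Signature} (r : ProdRule S) : Finset ℕ :=
  (Finset.univ.biUnion fun i => (r.conclArgs i).fv) ∪
    (r.ordPrems.foldr (fun q s => s ∪ Finset.univ.biUnion fun i => (q.2 i).fv) ∅) ∪
    (r.indPrems.foldr (fun p s => s ∪ Finset.univ.biUnion fun i => (p.2 i).fv) ∅)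

def bigAnd {S : Signature} : List (Fm S) → Fm S
  | [] => .not .fals
  | A :: l => .and A (bigAnd l)

def bigOr {S : Signature} : List (Fm S) → Fm S
  | [] => .fals
  | A :: l => .or A (bigOr l)

def exList {S : Signature} : List ℕ → Fm S → Fm S
  | [], A => A
  | n :: l, A => .ex n (exList l A)

/-- The `k`-fold syntactic unfolding `P^{(k)}(t⃗)` of an inductive predicate:
`P^{(0)}(t⃗) ≡ ⊥` and `P^{(k+1)}(t⃗)` is the disjunction, over production rules with
conclusion `P t⃗₀`, of `∃y⃗ (t⃗ = t⃗₀ ∧ ⋀ Q_l u⃗_l ∧ ⋀ P_{j_p}^{(k)}(t⃗_p))`, with the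
rule variables `y⃗` renamed to be fresh for `t⃗`. -/
def unfold {S : Signature} [DecidableEq S.IndPred] (Φ : List (ProdRule S)) :
    ℕ → (P : S.IndPred) → (Fin (S.arI P) → Tm S) → Fm S
  | 0, _, _ => .fals
  | (k+1), P, ts =>
    bigOr (Φ.map fun r =>
      if h : r.concl = P then
        let N : ℕ := ((Finset.univ.biUnion fun i => (ts i).fv).sup id) + 1
        let σ : ℕ → Tm S := fun n => .var (n + N)
        exList ((r.vars.sort (· ≤ ·)).map (· + N))
          (.and (bigAnd ((List.finRange (S.arI P)).map fun i =>
              .eq (ts i) (((h ▸ r.conclArgs) i).subst σ)))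
            (.and (bigAnd (r.ordPrems.map fun q => .pred q.1 fun i => (q.2 i).subst σ))
              (bigAnd (r.indPrems.map fun p => unfold Φ k p.1 fun i => (p.2 i).subst σ))))
      else .fals)

/-!
Induction on `k`. For a rule `r` with conclusion `P t⃗₀`, the disjunct of `P^{(k+1)}(t⃗)` for `r`
holds under `ρ` iff some assignment `ρ₀` satisfies the premises of `r` (the inductive ones through
`P_j^{(k)}`, i.e. by induction in `φᵏ(∅⃗)`) and has `⟦t⃗₀⟧ρ₀ = ⟦t⃗⟧ρ`. Since the rule variables are
renamed beyond all variables of `t⃗`, the block `∃y⃗` can choose `ρ₀` on them freely without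
disturbing `⟦t⃗⟧ρ`.
-/

section

variable {S : Signature}

namespace Tm

theorem eval_congr (M : Struc S) {ρ ρ' : ℕ → M.U} :
    ∀ {t : Tm S}, Set.EqOn ρ ρ' t.fv → t.eval M ρ = t.eval M ρ'
  | .var n, h => h (by simp [Tm.fv])
  | .func f ts, h => by
      simp only [Tm.eval]
      congr 1
      funext i
      exact eval_congr M fun n hn =>
        h (Finset.mem_coe.mpr (Finset.mem_biUnion.mpr ⟨i, Finset.mem_univ i, Finset.mem_coe.mp hn⟩))

theorem eval_subst (M : Struc S) (σ : ℕ → Tm S) (ρ : ℕ → M.U) :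
    ∀ t : Tm S, (t.subst σ).eval M ρ = t.eval M fun n => (σ n).eval M ρ
  | .var _ => rfl
  | .func f ts => by
      simp only [Tm.subst, Tm.eval]
      congr 1
      funext i
      exact eval_subst M σ ρ (ts i)

end Tm

theorem sat_bigAnd (M : Struc S) (ρ : ℕ → M.U) (l : List (Fm S)) :
    Sat M ρ (bigAnd l) ↔ ∀ A ∈ l, Sat M ρ A := by
  induction l with
  | nil => simp [bigAnd, Sat]
  | cons A l ih => simp [bigAnd, Sat, ih]

theorem sat_bigOr (M : Struc S) (ρ : ℕ → M.U) (l : List (Fm S)) :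
    Sat M ρ (bigOr l) ↔ ∃ A ∈ l, Sat M ρ A := by
  induction l with
  | nil => simp [bigOr, Sat]
  | cons A l ih => simp [bigOr, Sat, ih]

theorem sat_exList (M : Struc S) (l : List ℕ) (ρ : ℕ → M.U) (A : Fm S) :
    Sat M ρ (exList l A) ↔ ∃ ρ' : ℕ → M.U, (∀ m ∉ l, ρ' m = ρ m) ∧ Sat M ρ' A := by
  induction l generalizing ρ with
  | nil =>
    refine ⟨fun h => ⟨ρ, fun _ _ => rfl, h⟩, fun ⟨ρ', hρ', h⟩ => ?_⟩
    rwa [show ρ' = ρ from funext fun m => hρ' m List.not_mem_nil] at h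
  | cons n l ih =>
    simp only [exList, Sat, ih, List.mem_cons, not_or]
    constructor
    · rintro ⟨a, ρ', hρ', h⟩
      exact ⟨ρ', fun m ⟨hmn, hml⟩ => by rw [hρ' m hml, update, if_neg hmn], h⟩
    · rintro ⟨ρ', hρ', h⟩
      refine ⟨ρ' n, ρ', fun m hml => ?_, h⟩
      by_cases hmn : m = n
      · simp [update, hmn]
      · rw [update, if_neg hmn, hρ' m ⟨hmn, hml⟩]

theorem Finset.subset_foldr_union {α β : Type*} [DecidableEq β] (g : α → Finset β)
    {L : List α} {a : α} (ha : a ∈ L) : g a ⊆ L.foldr (fun b s => s ∪ g b) ∅ := by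
  induction L with
  | nil => simp at ha
  | cons b L ih =>
    rcases List.mem_cons.mp ha with rfl | ha
    · exact Finset.subset_union_right
    · exact (ih ha).trans Finset.subset_union_left

namespace ProdRule

theorem fv_conclArgs_subset_vars (r : ProdRule S) (i : Fin (S.arI r.concl)) :
    (r.conclArgs i).fv ⊆ r.vars := by
  intro n hn
  refine Finset.mem_union_left _ (Finset.mem_union_left _ ?_)
  exact Finset.mem_biUnion.mpr ⟨i, Finset.mem_univ i, hn⟩

theorem fv_ordPrem_subset_vars (r : ProdRule S) {q : (Q : S.Pred) × (Fin (S.arP Q) → Tm S)}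
    (hq : q ∈ r.ordPrems) (i : Fin (S.arP q.1)) : (q.2 i).fv ⊆ r.vars := by
  intro n hn
  refine Finset.mem_union_left _ (Finset.mem_union_right _ ?_)
  exact Finset.subset_foldr_union
    (fun q : (Q : S.Pred) × (Fin (S.arP Q) → Tm S) => Finset.univ.biUnion fun j => (q.2 j).fv)
    hq (Finset.mem_biUnion.mpr ⟨i, Finset.mem_univ i, hn⟩)

theorem fv_indPrem_subset_vars (r : ProdRule S) {p : (P : S.IndPred) × (Fin (S.arI P) → Tm S)}
    (hp : p ∈ r.indPrems) (i : Fin (S.arI p.1)) : (p.2 i).fv ⊆ r.vars := by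
  intro n hn
  refine Finset.mem_union_right _ ?_
  exact Finset.subset_foldr_union
    (fun p : (P : S.IndPred) × (Fin (S.arI P) → Tm S) => Finset.univ.biUnion fun j => (p.2 j).fv)
    hp (Finset.mem_biUnion.mpr ⟨i, Finset.mem_univ i, hn⟩)

variable (M : Struc S) (X : Set ((P : S.IndPred) × (Fin (S.arI P) → M.U)))

def PremisesHold (r : ProdRule S) (ρ : ℕ → M.U) : Prop :=
  (∀ q ∈ r.ordPrems, (fun i => (q.2 i).eval M ρ) ∈ M.interpP q.1) ∧
    (∀ p ∈ r.indPrems, ⟨p.1, fun i => (p.2 i).eval M ρ⟩ ∈ X)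

variable {M X}

theorem PremisesHold.of_eqOn {r : ProdRule S} {ρ ρ' : ℕ → M.U} (h : r.PremisesHold M X ρ)
    (hρ : Set.EqOn ρ ρ' r.vars) : r.PremisesHold M X ρ' := by
  have hq : ∀ q ∈ r.ordPrems, (fun i => (q.2 i).eval M ρ') = fun i => (q.2 i).eval M ρ :=
    fun q hq => funext fun i =>
      (Tm.eval_congr M (hρ.mono (Finset.coe_subset.mpr (r.fv_ordPrem_subset_vars hq i)))).symm
  have hp : ∀ p ∈ r.indPrems, (fun i => (p.2 i).eval M ρ') = fun i => (p.2 i).eval M ρ :=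
    fun p hp => funext fun i =>
      (Tm.eval_congr M (hρ.mono (Finset.coe_subset.mpr (r.fv_indPrem_subset_vars hp i)))).symm
  exact ⟨fun q hq' => hq q hq' ▸ h.1 q hq', fun p hp' => hp p hp' ▸ h.2 p hp'⟩

end ProdRule

theorem mem_step_iff (M : Struc S) (Φ : List (ProdRule S))
    (X : Set ((P : S.IndPred) × (Fin (S.arI P) → M.U)))
    (x : (P : S.IndPred) × (Fin (S.arI P) → M.U)) :
    x ∈ step M Φ X ↔ ∃ r ∈ Φ, ∃ ρ, r.PremisesHold M X ρ ∧
      x = ⟨r.concl, fun i => (r.conclArgs i).eval M ρ⟩ := by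
  simp only [ProdRule.PremisesHold, and_assoc]
  rfl

namespace ProdRule

variable {M : Struc S} {X : Set ((P : S.IndPred) × (Fin (S.arI P) → M.U))}

-- The disjunct contributed by `r` to `unfold`, with `F` for the previous unfolding and the
-- rule variables shifted by `N` to keep them apart from the variables of `ts`.
def clauseBody (r : ProdRule S) (F : (P : S.IndPred) → (Fin (S.arI P) → Tm S) → Fm S)
    (ts : Fin (S.arI r.concl) → Tm S) (N : ℕ) : Fm S :=
  .and (bigAnd ((List.finRange (S.arI r.concl)).map fun i =>
      .eq (ts i) ((r.conclArgs i).subst fun n => .var (n + N))))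
    (.and (bigAnd (r.ordPrems.map fun q => .pred q.1 fun i => (q.2 i).subst fun n => .var (n + N)))
      (bigAnd (r.indPrems.map fun p => F p.1 fun i => (p.2 i).subst fun n => .var (n + N))))

def clause (r : ProdRule S) (F : (P : S.IndPred) → (Fin (S.arI P) → Tm S) → Fm S)
    (ts : Fin (S.arI r.concl) → Tm S) (N : ℕ) : Fm S :=
  exList ((r.vars.sort (· ≤ ·)).map (· + N)) (r.clauseBody F ts N)

variable {F : (P : S.IndPred) → (Fin (S.arI P) → Tm S) → Fm S}

theorem sat_clauseBody (r : ProdRule S)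
    (hF : ∀ P ts ρ, (⟨P, fun i => (ts i).eval M ρ⟩ ∈ X) ↔ Sat M ρ (F P ts))
    (ts : Fin (S.arI r.concl) → Tm S) (N : ℕ) (ρ : ℕ → M.U) :
    Sat M ρ (r.clauseBody F ts N) ↔
      (∀ i, (ts i).eval M ρ = (r.conclArgs i).eval M fun n => ρ (n + N)) ∧
        r.PremisesHold M X fun n => ρ (n + N) := by
  simp only [clauseBody, Sat, sat_bigAnd, List.forall_mem_map, Tm.eval_subst, Tm.eval, ← hF,
    PremisesHold, List.mem_finRange, true_implies]

theorem sat_clause_iff (r : ProdRule S)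
    (hF : ∀ P ts ρ, (⟨P, fun i => (ts i).eval M ρ⟩ ∈ X) ↔ Sat M ρ (F P ts))
    {ts : Fin (S.arI r.concl) → Tm S} {N : ℕ} (hN : ∀ i, ∀ n ∈ (ts i).fv, n < N)
    (ρ : ℕ → M.U) :
    Sat M ρ (r.clause F ts N) ↔
      ∃ ρ₀, r.PremisesHold M X ρ₀ ∧ ∀ i, (ts i).eval M ρ = (r.conclArgs i).eval M ρ₀ := by
  have hts : ∀ ρ' : ℕ → M.U, (∀ m < N, ρ' m = ρ m) → ∀ i, (ts i).eval M ρ' = (ts i).eval M ρ :=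
    fun ρ' hρ' i => Tm.eval_congr M fun n hn => hρ' n (hN i n hn)
  rw [clause, sat_exList]
  simp only [sat_clauseBody r hF, List.mem_map, Finset.mem_sort]
  constructor
  · rintro ⟨ρ', hρ', hconcl, hprem⟩
    refine ⟨_, hprem, fun i => ?_⟩
    rw [← hconcl i, hts ρ' fun m hm => hρ' m ?_]
    rintro ⟨n, -, rfl⟩
    omega
  · rintro ⟨ρ₀, hprem, hconcl⟩
    let ρ' : ℕ → M.U := fun m => if N ≤ m ∧ m - N ∈ r.vars then ρ₀ (m - N) else ρ m
    have hshift : Set.EqOn ρ₀ (fun n => ρ' (n + N)) r.vars := fun n hn => by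
      simp [ρ', Finset.mem_coe.mp hn]
    refine ⟨ρ', fun m hm => if_neg ?_, fun i => ?_, hprem.of_eqOn hshift⟩
    · rintro ⟨hNm, hm'⟩
      exact hm ⟨m - N, hm', Nat.sub_add_cancel hNm⟩
    · rw [hts ρ' fun m hm => if_neg fun h => by omega, hconcl i]
      exact Tm.eval_congr M (hshift.mono (Finset.coe_subset.mpr (r.fv_conclArgs_subset_vars i)))

end ProdRule

end

/-- an element `⟦t⃗⟧ρ` lies in the `P`-component of the `k`-th iterate
`φ^[k] ∅` of the operator for the production rules iff the `k`-fold syntactic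
unfolding `P^{(k)}(t⃗)` holds in `M` under `ρ`. -/
theorem stmt2 {S : Signature} [DecidableEq S.IndPred] (Φ : List (ProdRule S))
    (M : Struc S) (k : ℕ) (P : S.IndPred) (ts : Fin (S.arI P) → Tm S) (ρ : ℕ → M.U) :
    (⟨P, fun i => (ts i).eval M ρ⟩ ∈ (step M Φ)^[k] ∅) ↔ Sat M ρ (unfold Φ k P ts) := by
  induction k generalizing P ts ρ with
  | zero => simp [unfold, Sat]
  | succ k ih =>
    have hN : ∀ i, ∀ n ∈ (ts i).fv, n < (Finset.univ.biUnion fun i => (ts i).fv).sup id + 1 :=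
      fun i n hn => Nat.lt_succ_of_le <|
        Finset.le_sup (f := id) (Finset.mem_biUnion.mpr ⟨i, Finset.mem_univ i, hn⟩)
    rw [Function.iterate_succ_apply', mem_step_iff, unfold, sat_bigOr]
    simp only [List.mem_map, exists_exists_and_eq_and]
    refine exists_congr fun r => and_congr_right fun _ => ?_
    by_cases h : r.concl = P
    · subst h
      rw [dif_pos rfl]
      refine Iff.trans ?_ (r.sat_clause_iff ih hN ρ).symm
      simp only [Sigma.mk.inj_iff, heq_eq_eq, true_and, funext_iff]
    · rw [dif_neg h]
      simp only [Sat, iff_false]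
      rintro ⟨_, _, hx⟩
      exact h (congrArg Sigma.fst hx).symm
end

section
/- If M is a name-extended standard model for (Σ_c, Φ), then its term model M_T is a standard model for (Σ_c, Φ), i.e., each inductive predicate in M_T is interpreted as the least fixpoint of the operator for Φ over the term universe. -/
/-! ### Name constants and term models -/

/-- The signature `Σ_c` extending `Σ` by countably many fresh name constants. -/
def Signature.addConsts (S : Signature) : Signature where
  Func := S.Func ⊕ ℕ
  arF := fun f => match f with
    | .inl f => S.arF f
    | .inr _ => 0
  Pred := S.Pred
  arP := S.arP
  IndPred := S.IndPred
  arI := S.arI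

/-- Lifting of terms along `Σ ⊆ Σ_c`. -/
def Tm.lift {S : Signature} : Tm S → Tm S.addConsts
  | .var n => .var n
  | .func f ts => .func (Sum.inl f) (fun i => (ts i).lift)

/-- Lifting of formulas along `Σ ⊆ Σ_c`. -/
def Fm.lift {S : Signature} : Fm S → Fm S.addConsts
  | .fals => .fals
  | .eq t u => .eq t.lift u.lift
  | .pred Q ts => .pred Q (fun i => (ts i).lift)
  | .ind P ts => .ind P (fun i => (ts i).lift)
  | .not A => .not A.lift
  | .and A B => .and A.lift B.lift
  | .or A B => .or A.lift B.lift
  | .imp A B => .imp A.lift B.lift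
  | .all n A => .all n A.lift
  | .ex n A => .ex n A.lift

/-- Lifting of production rules along `Σ ⊆ Σ_c`. -/
def ProdRule.lift {S : Signature} (r : ProdRule S) : ProdRule S.addConsts where
  concl := r.concl
  conclArgs := fun i => (r.conclArgs i).lift
  ordPrems := r.ordPrems.map fun q => ⟨q.1, fun i => (q.2 i).lift⟩
  indPrems := r.indPrems.map fun p => ⟨p.1, fun i => (p.2 i).lift⟩

/-- The name-extension `M_c` of a structure `M`, interpreting the `i`-th name
constant as `c i`. -/
def addConstsStruc {S : Signature} (M : Struc S) (c : ℕ → M.U) : Struc S.addConsts where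
  U := M.U
  interpF := fun f => match f with
    | .inl f => M.interpF f
    | .inr n => fun _ => c n
  interpP := M.interpP
  interpI := M.interpI

/-- A structure for `Σ_c` is name-extended if every element of its universe is the
interpretation of some name constant. -/
def NameExtended {S : Signature} (M : Struc S.addConsts) : Prop :=
  ∀ u : M.U, ∃ n : ℕ, M.interpF (Sum.inr n) (fun i => i.elim0) = u

/-- Closed terms of a signature. -/
def ClosedTm (S : Signature) : Type := {t : Tm S // t.fv = ∅}

/-- Application of a function symbol to closed terms. -/
def ClosedTm.func {S : Signature} (f : S.Func) (ts : Fin (S.arF f) → ClosedTm S) :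
    ClosedTm S :=
  ⟨.func f (fun i => (ts i).1), by
    have h : ∀ i, ((ts i).1).fv = ∅ := fun i => (ts i).2
    simp only [Tm.fv, h]
    ext n
    simp⟩

/-- The data of a term model: an equivalence relation on closed terms compatible with
the function symbols, together with interpretations of the predicate symbols on
closed terms that respect the relation. -/
structure TermModelData (S : Signature) : Type where
  rel : ClosedTm S → ClosedTm S → Prop
  equiv : Equivalence rel
  congrF : ∀ (f : S.Func) (ts us : Fin (S.arF f) → ClosedTm S),
    (∀ i, rel (ts i) (us i)) → rel (ClosedTm.func f ts) (ClosedTm.func f us)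
  interpP (Q : S.Pred) : Set (Fin (S.arP Q) → ClosedTm S)
  respP : ∀ (Q : S.Pred) (ts us : Fin (S.arP Q) → ClosedTm S),
    (∀ i, rel (ts i) (us i)) → (ts ∈ interpP Q ↔ us ∈ interpP Q)
  interpI : Set ((P : S.IndPred) × (Fin (S.arI P) → ClosedTm S))
  respI : ∀ (P : S.IndPred) (ts us : Fin (S.arI P) → ClosedTm S),
    (∀ i, rel (ts i) (us i)) → (⟨P, ts⟩ ∈ interpI ↔ ⟨P, us⟩ ∈ interpI)

def TermModelData.setoid {S : Signature} (D : TermModelData S) : Setoid (ClosedTm S) :=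
  ⟨D.rel, D.equiv⟩

/-- The term model determined by term-model data: its universe is the quotient of the
set of closed terms, constants and function symbols are interpreted syntactically on
equivalence classes. -/
noncomputable def TermModelData.toStruc {S : Signature} (D : TermModelData S) : Struc S where
  U := Quotient D.setoid
  interpF f args :=
    Quotient.mk D.setoid (ClosedTm.func f (fun i => (args i).out))
  interpP Q := { v | ∃ g : Fin (S.arP Q) → ClosedTm S,
      (∀ i, v i = Quotient.mk D.setoid (g i)) ∧ g ∈ D.interpP Q }
  interpI := { v | ∃ g : Fin (S.arI v.1) → ClosedTm S,
      (∀ i, v.2 i = Quotient.mk D.setoid (g i)) ∧ ⟨v.1, g⟩ ∈ D.interpI }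

/-- The term-model data canonically associated with a structure `M`: closed terms are
identified iff they have the same value in `M`, and predicates hold of closed terms
iff they hold of their values in `M`. -/
def Struc.termData {S : Signature} (M : Struc S) : TermModelData S where
  rel t u := ∀ ρ : ℕ → M.U, t.1.eval M ρ = u.1.eval M ρ
  equiv := ⟨fun _ _ => rfl, fun h ρ => (h ρ).symm, fun h h' ρ => (h ρ).trans (h' ρ)⟩
  congrF f ts us h := fun ρ => congrArg (M.interpF f) (funext fun i => h i ρ)
  interpP Q := { ts | ∀ ρ : ℕ → M.U, (fun i => (ts i).1.eval M ρ) ∈ M.interpP Q }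
  respP Q ts us h := by
    constructor <;> intro hm ρ <;> have := hm ρ
    · rwa [show (fun i => (us i).1.eval M ρ) = fun i => (ts i).1.eval M ρ from
        funext fun i => (h i ρ).symm]
    · rwa [show (fun i => (ts i).1.eval M ρ) = fun i => (us i).1.eval M ρ from
        funext fun i => h i ρ]
  interpI := { v | ∀ ρ : ℕ → M.U, (⟨v.1, fun i => (v.2 i).1.eval M ρ⟩ :
      (P : S.IndPred) × (Fin (S.arI P) → M.U)) ∈ M.interpI }
  respI P ts us h := by
    constructor <;> intro hm ρ <;> have := hm ρ
    · rwa [show (fun i => (us i).1.eval M ρ) = fun i => (ts i).1.eval M ρ from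
        funext fun i => (h i ρ).symm]
    · rwa [show (fun i => (ts i).1.eval M ρ) = fun i => (us i).1.eval M ρ from
        funext fun i => h i ρ]

/-- The term model `M_T` of a structure `M`. -/
noncomputable def termModel {S : Signature} (M : Struc S) : Struc S :=
  (Struc.termData M).toStruc

/-!
Evaluating closed terms in `M` gives a map from the term model `M_T` to `M`. It is injective
because `M_T` identifies exactly the closed terms that `M` equates, and surjective because every
element of `M` is named by a constant. This bijection respects function symbols and ordinary
predicates, so it conjugates the rule operator of `M_T` to that of `M` and carries one least
fixpoint onto the other; as the inductive predicates of `M_T` are by definition the pullback of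
those of `M`, standardness transfers.
-/

section StrucIso

variable {S : Signature}

/-- An isomorphism of structures that ignores `interpI`, the interpretation that `Standard`
constrains. -/
structure Struc.Iso (A B : Struc S) extends A.U ≃ B.U where
  map_interpF (f : S.Func) (args : Fin (S.arF f) → A.U) :
    toFun (A.interpF f args) = B.interpF f (toFun ∘ args)
  comp_mem_interpP_iff (Q : S.Pred) (v : Fin (S.arP Q) → A.U) :
    toFun ∘ v ∈ B.interpP Q ↔ v ∈ A.interpP Q

namespace Struc.Iso

variable {A B : Struc S} (e : A.Iso B)

def mapAtom : ((P : S.IndPred) × (Fin (S.arI P) → A.U)) ≃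
    ((P : S.IndPred) × (Fin (S.arI P) → B.U)) :=
  Equiv.sigmaCongrRight fun _ => (Equiv.refl _).arrowCongr e.toEquiv

@[simp]
theorem mapAtom_mk (P : S.IndPred) (v : Fin (S.arI P) → A.U) :
    e.mapAtom ⟨P, v⟩ = ⟨P, e.toEquiv ∘ v⟩ :=
  rfl

@[simp]
theorem eval_map (t : Tm S) (ρ : ℕ → A.U) :
    e.toEquiv (t.eval A ρ) = t.eval B (e.toEquiv ∘ ρ) := by
  induction t with
  | var n => rfl
  | func f ts ih =>
    exact (e.map_interpF f _).trans (congrArg (B.interpF f) (funext ih))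

theorem step_preimage (Φ : List (ProdRule S))
    (X : Set ((P : S.IndPred) × (Fin (S.arI P) → B.U))) :
    step A Φ (e.mapAtom ⁻¹' X) = e.mapAtom ⁻¹' step B Φ X := by
  ext v
  constructor
  · rintro ⟨r, hr, ρ, hq, hp, rfl⟩
    refine ⟨r, hr, e.toEquiv ∘ ρ, fun q hq' => ?_, fun p hp' => ?_, ?_⟩
    · simpa [← e.comp_mem_interpP_iff, Function.comp_def] using hq q hq'
    · simpa [Function.comp_def] using hp p hp'
    · simp [Function.comp_def]
  · rintro ⟨r, hr, ρ, hq, hp, hv⟩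
    refine ⟨r, hr, e.toEquiv.symm ∘ ρ, fun q hq' => ?_, fun p hp' => ?_, ?_⟩
    · rw [← e.comp_mem_interpP_iff]
      simpa [Function.comp_def] using hq q hq'
    · simpa [Set.mem_preimage, Function.comp_def] using hp p hp'
    · apply e.mapAtom.injective
      simpa [Function.comp_def] using hv

theorem lfp_stepHom (Φ : List (ProdRule S)) :
    OrderHom.lfp (stepHom A Φ) = e.mapAtom ⁻¹' OrderHom.lfp (stepHom B Φ) := by
  let pullback : Set ((P : S.IndPred) × (Fin (S.arI P) → B.U)) →o
      Set ((P : S.IndPred) × (Fin (S.arI P) → A.U)) :=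
    ⟨(e.mapAtom ⁻¹' ·), fun _ _ h => Set.preimage_mono h⟩
  let pushforward : Set ((P : S.IndPred) × (Fin (S.arI P) → A.U)) →o
      Set ((P : S.IndPred) × (Fin (S.arI P) → B.U)) :=
    ⟨(e.mapAtom.symm ⁻¹' ·), fun _ _ h => Set.preimage_mono h⟩
  have hB : (stepHom B Φ).comp (pushforward.comp pullback) = stepHom B Φ := by
    refine OrderHom.ext _ _ (funext fun X => ?_)
    exact congrArg (step B Φ) (e.mapAtom.symm_preimage_preimage X)
  have hA : pullback.comp ((stepHom B Φ).comp pushforward) = stepHom A Φ := by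
    refine OrderHom.ext _ _ (funext fun Y => ?_)
    change e.mapAtom ⁻¹' step B Φ (e.mapAtom.symm ⁻¹' Y) = step A Φ Y
    rw [← e.step_preimage, e.mapAtom.preimage_symm_preimage]
  -- the rolling rule `f (lfp (g ∘ f)) = lfp (f ∘ g)` with `f` the pullback along `e.mapAtom`
  have := OrderHom.map_lfp_comp pullback ((stepHom B Φ).comp pushforward)
  rw [OrderHom.comp_assoc, hB, hA] at this
  exact this.symm

theorem standard_iff (Φ : List (ProdRule S)) (hI : A.interpI = e.mapAtom ⁻¹' B.interpI) :
    Standard A Φ ↔ Standard B Φ := by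
  rw [Standard, Standard, hI, e.lfp_stepHom]
  exact (Set.preimage_injective.mpr e.mapAtom.surjective).eq_iff

end Struc.Iso

end StrucIso

section TermModel

variable {S : Signature}

theorem Tm.eval_congr_s7 (M : Struc S) (t : Tm S) {ρ ρ' : ℕ → M.U}
    (h : ∀ n ∈ t.fv, ρ n = ρ' n) : t.eval M ρ = t.eval M ρ' := by
  induction t with
  | var n => exact h n (Finset.mem_singleton_self n)
  | func f ts ih =>
    refine congrArg (M.interpF f) (funext fun i => ih i fun n hn => h n ?_)
    exact Finset.mem_biUnion.mpr ⟨i, Finset.mem_univ i, hn⟩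

theorem ClosedTm.eval_eq (M : Struc S) (t : ClosedTm S) (ρ ρ' : ℕ → M.U) :
    t.1.eval M ρ = t.1.eval M ρ' :=
  Tm.eval_congr_s7 M t.1 fun n hn => absurd (t.2 ▸ hn) (Finset.notMem_empty n)

variable (M : Struc S) (ρ₀ : ℕ → M.U)

/-- `ρ₀` is a dummy assignment: closed terms do not depend on it. -/
def termVal : (termModel M).U → M.U :=
  Quotient.lift (s := (Struc.termData M).setoid) (fun t => t.1.eval M ρ₀) fun _ _ h => h ρ₀

theorem termVal_injective : Function.Injective (termVal M ρ₀) := by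
  rintro ⟨t⟩ ⟨u⟩ h
  refine Quotient.sound fun ρ => ?_
  rw [ClosedTm.eval_eq M t ρ ρ₀, ClosedTm.eval_eq M u ρ ρ₀]
  exact h

theorem termVal_interpF (f : S.Func) (args : Fin (S.arF f) → (termModel M).U) :
    termVal M ρ₀ ((termModel M).interpF f args) = M.interpF f (termVal M ρ₀ ∘ args) :=
  congrArg (M.interpF f) (funext fun i => congrArg (termVal M ρ₀) (Quotient.out_eq (args i)))

theorem exists_closedTm_rep_iff {n : ℕ} (Z : Set (Fin n → M.U))
    (v : Fin n → (termModel M).U) :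
    (∃ g : Fin n → ClosedTm S, (∀ i, v i = Quotient.mk (Struc.termData M).setoid (g i)) ∧
        ∀ ρ : ℕ → M.U, (fun i => (g i).1.eval M ρ) ∈ Z) ↔
      termVal M ρ₀ ∘ v ∈ Z := by
  constructor
  · rintro ⟨g, hg, hZ⟩
    convert hZ ρ₀ using 1
    exact funext fun i => congrArg (termVal M ρ₀) (hg i)
  · refine fun hv => ⟨fun i => (v i).out, fun i => (Quotient.out_eq (v i)).symm, fun ρ => ?_⟩
    convert hv using 1
    exact funext fun i =>
      (ClosedTm.eval_eq M _ ρ ρ₀).trans (congrArg (termVal M ρ₀) (Quotient.out_eq (v i)))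

variable {M ρ₀} in
noncomputable def termModelIso (hbij : Function.Bijective (termVal M ρ₀)) :
    (termModel M).Iso M where
  toEquiv := Equiv.ofBijective _ hbij
  map_interpF := termVal_interpF M ρ₀
  comp_mem_interpP_iff _ v := (exists_closedTm_rep_iff M ρ₀ _ v).symm

theorem termModel_interpI (hbij : Function.Bijective (termVal M ρ₀)) :
    (termModel M).interpI = (termModelIso hbij).mapAtom ⁻¹' M.interpI :=
  Set.ext fun v => exists_closedTm_rep_iff M ρ₀
    {w | (⟨v.1, w⟩ : (P : S.IndPred) × (Fin (S.arI P) → M.U)) ∈ M.interpI} v.2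

end TermModel

theorem termVal_surjective {S : Signature} {M : Struc S.addConsts} (hne : NameExtended M)
    (ρ₀ : ℕ → M.U) : Function.Surjective (termVal M ρ₀) := by
  intro u
  obtain ⟨n, rfl⟩ := hne u
  refine ⟨Quotient.mk _ (ClosedTm.func (S := S.addConsts) (Sum.inr n) Fin.elim0), ?_⟩
  exact congrArg (M.interpF (Sum.inr n)) (funext fun i => i.elim0)

theorem stmt7_general {S : Signature} (Φ : List (ProdRule S)) (M : Struc S.addConsts)
    (hne : NameExtended M) (hstd : Standard M (Φ.map ProdRule.lift)) :
    Standard (termModel M) (Φ.map ProdRule.lift) := by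
  let ρ₀ : ℕ → M.U := fun _ => M.interpF (Sum.inr 0) Fin.elim0
  have hbij : Function.Bijective (termVal M ρ₀) :=
    ⟨termVal_injective M ρ₀, termVal_surjective hne ρ₀⟩
  exact ((termModelIso hbij).standard_iff _ (termModel_interpI M ρ₀ hbij)).mpr hstd

/-- if `M` is a name-extended standard model for `(Σ_c, Φ)`, then its
term model `M_T` is a standard model for `(Σ_c, Φ)`: each inductive predicate in
`M_T` is interpreted as the least fixpoint of the operator for `Φ` over the term
universe. -/
theorem stmt7 {S : Signature} (Φ : List (ProdRule S)) (M : Struc S.addConsts)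
    [Nonempty M.U] (hne : NameExtended M) (hstd : Standard M (Φ.map ProdRule.lift)) :
    Standard (termModel M) (Φ.map ProdRule.lift) :=
  stmt7_general Φ M hne hstd
end

section
/- The set of Gödel codes of first-order formulas (in the language of PA extended with an uninterpreted unary function symbol F) that are true in every standard model of PA + F is Π¹₁-hard: every Π¹₁ subset of ℕ many-one reduces to it via n ↦ ⌜A(F, n̄)⌝. -/
/-! ### The language of PA with an extra function symbol F, and the signature with
the inductive predicate N -/

/-- Function symbols of PA + F: zero, successor, addition, multiplication and the
uninterpreted function symbol F. -/
inductive PAFunc : Type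
  | zero | succ | plus | times | F

def arPAF : PAFunc → ℕ
  | .zero => 0
  | .succ => 1
  | .plus => 2
  | .times => 2
  | .F => 1

/-- The signature of PA + F (no ordinary and no inductive predicate symbols). -/
def SigPAF : Signature :=
  ⟨PAFunc, arPAF, Empty, fun e => e.elim, Empty, fun e => e.elim⟩

/-- The standard model of PA + F with universe ℕ, the usual interpretations of
`0, s, +, ×`, and `F` interpreted by `φ`. -/
def stdPAF (φ : ℕ → ℕ) : Struc SigPAF where
  U := ℕ
  interpF := fun f => match f with
    | .zero => fun _ => 0
    | .succ => fun v : Fin 1 → ℕ => v 0 + 1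
    | .plus => fun v : Fin 2 → ℕ => v 0 + v 1
    | .times => fun v : Fin 2 → ℕ => v 0 * v 1
    | .F => fun v : Fin 1 → ℕ => φ (v 0)
  interpP := fun Q => nomatch Q
  interpI := ∅

/-- Numerals. -/
def numeral : ℕ → Tm SigPAF
  | 0 => .func .zero ![]
  | n + 1 => .func .succ ![numeral n]

/-- The signature `Σ_PA^F`: the function symbols of PA + F together with a unary
inductive predicate symbol `N`. -/
def SigPAFN : Signature :=
  ⟨PAFunc, arPAF, Empty, fun e => e.elim, Unit, fun _ => 1⟩

def tmMap : Tm SigPAF → Tm SigPAFN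
  | .var n => .var n
  | .func f ts => .func f (fun i => tmMap (ts i))

/-- The relativization `A^N` of a PA + F formula to the inductive predicate `N`:
quantifiers are bounded to `N`, atomic formulas are unchanged. -/
def relN : Fm SigPAF → Fm SigPAFN
  | .fals => .fals
  | .eq t u => .eq (tmMap t) (tmMap u)
  | .pred Q _ => nomatch Q
  | .ind P _ => nomatch P
  | .not A => .not (relN A)
  | .and A B => .and (relN A) (relN B)
  | .or A B => .or (relN A) (relN B)
  | .imp A B => .imp (relN A) (relN B)
  | .all x A => .all x (.imp (.ind () (fun _ => .var x)) (relN A))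
  | .ex x A => .ex x (.and (.ind () (fun _ => .var x)) (relN A))

/-- The production rules `Φ_N` for `N`: `N 0`, and `N x ⟹ N (s x)`. -/
def ruleN0 : ProdRule SigPAFN :=
  { concl := (), conclArgs := fun _ => .func .zero ![], ordPrems := [], indPrems := [] }

def ruleNs : ProdRule SigPAFN :=
  { concl := (), conclArgs := fun _ => .func .succ ![.var 0], ordPrems := [],
    indPrems := [⟨(), fun _ => .var 0⟩] }

def PhiN : List (ProdRule SigPAFN) := [ruleN0, ruleNs]

/-- The Peano axioms (PA1)–(PA6) as formulas of PA + F. -/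
def PA1 : Fm SigPAF := .all 0 (.not (.eq (.func .succ ![.var 0]) (.func .zero ![])))
def PA2 : Fm SigPAF := .all 0 (.all 1 (.imp
  (.eq (.func .succ ![.var 0]) (.func .succ ![.var 1])) (.eq (.var 0) (.var 1))))
def PA3 : Fm SigPAF := .all 0 (.eq (.func .plus ![.var 0, .func .zero ![]]) (.var 0))
def PA4 : Fm SigPAF := .all 0 (.all 1 (.eq
  (.func .plus ![.var 0, .func .succ ![.var 1]])
  (.func .succ ![.func .plus ![.var 0, .var 1]])))
def PA5 : Fm SigPAF := .all 0 (.eq (.func .times ![.var 0, .func .zero ![]])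
  (.func .zero ![]))
def PA6 : Fm SigPAF := .all 0 (.all 1 (.eq
  (.func .times ![.var 0, .func .succ ![.var 1]])
  (.func .plus ![.func .times ![.var 0, .var 1], .var 0])))

/-- The axiom `(F)`: `∀x (N x → N (F x))`. -/
def axF : Fm SigPAFN :=
  .all 0 (.imp (.ind () (fun _ => .var 0)) (.ind () (fun _ => .func .F ![.var 0])))

/-! Substituting the closed numeral `n̄` for the variable `0` commutes with satisfaction
(`⟦A(n̄)⟧ρ ↔ ⟦A⟧ρ[0 ↦ n]`) and, when `0` is the only free variable of `A`, yields a sentence;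
injectivity of the coding identifies the sentence named by a code. -/

lemma update_eq_function_update {α : Type} (ρ : ℕ → α) (n : ℕ) (a : α) :
    update ρ n a = Function.update ρ n a := by
  funext m
  simp only [update, Function.update_apply]

section ClosedSubstitution

variable {S : Signature} (x : ℕ) (t : Tm S)

abbrev substAt : ℕ → Tm S := fun m => if m = x then t else .var m

lemma Tm.eval_subst_substAt (M : Struc S) {c : M.U} (hc : ∀ ρ, t.eval M ρ = c)
    (ρ : ℕ → M.U) (a : Tm S) :
    (a.subst (substAt x t)).eval M ρ = a.eval M (update ρ x c) := by
  induction a with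
  | var m => by_cases h : m = x <;> simp [Tm.subst, Tm.eval, substAt, h, update, hc]
  | func f ts ih => simp only [Tm.subst, Tm.eval, ih]

lemma sat_substC_iff (M : Struc S) {c : M.U} (hc : ∀ ρ, t.eval M ρ = c) (A : Fm S)
    (ρ : ℕ → M.U) : Sat M ρ (A.substC x t) ↔ Sat M (update ρ x c) A := by
  induction A generalizing ρ with
  | fals | eq | pred | ind =>
    simp only [Fm.substC, Sat, Tm.eval_subst_substAt x t M hc]
  | not A ihA => simp only [Fm.substC, Sat, ihA]
  | and A B ihA ihB | or A B ihA ihB | imp A B ihA ihB => simp only [Fm.substC, Sat, ihA, ihB]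
  | all m A ihA | ex m A ihA =>
    simp only [Fm.substC]
    split_ifs with h
    · subst h
      simp only [Sat, update_eq_function_update, Function.update_idem]
    · simp only [Sat, ihA, update_eq_function_update, Function.update_comm h]

variable {x t}

lemma Tm.fv_subst_substAt_subset (ht : t.fv = ∅) (a : Tm S) :
    (a.subst (substAt x t)).fv ⊆ a.fv.erase x := by
  induction a with
  | var m =>
    by_cases h : m = x
    · simp [Tm.subst, substAt, h, ht]
    · simp [Tm.subst, substAt, h, Tm.fv]
  | func f ts ih =>
    simp only [Tm.subst, Tm.fv, Finset.erase_biUnion]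
    exact Finset.biUnion_mono fun i _ => ih i

lemma Fm.fv_substC_subset (ht : t.fv = ∅) (A : Fm S) : (A.substC x t).fv ⊆ A.fv.erase x := by
  induction A with
  | fals => simp [Fm.substC, Fm.fv]
  | eq a b =>
    simp only [Fm.substC, Fm.fv, Finset.erase_union_distrib]
    exact Finset.union_subset_union (Tm.fv_subst_substAt_subset ht a)
      (Tm.fv_subst_substAt_subset ht b)
  | pred _ ts | ind _ ts =>
    simp only [Fm.substC, Fm.fv, Finset.erase_biUnion]
    exact Finset.biUnion_mono fun i _ => Tm.fv_subst_substAt_subset ht (ts i)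
  | not A ihA => exact ihA
  | and A B ihA ihB | or A B ihA ihB | imp A B ihA ihB =>
    simp only [Fm.substC, Fm.fv, Finset.erase_union_distrib]
    exact Finset.union_subset_union ihA ihB
  | all m A ihA | ex m A ihA =>
    simp only [Fm.substC]
    split_ifs with h
    · simp only [Fm.fv, h, Finset.erase_idem, subset_refl]
    · rw [Fm.fv, Fm.fv, Finset.erase_right_comm]
      exact Finset.erase_subset_erase m ihA

lemma Fm.fv_substC_eq_empty (ht : t.fv = ∅) {A : Fm S} (hA : A.fv ⊆ {x}) :
    (A.substC x t).fv = ∅ :=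
  Finset.subset_empty.mp <| (Fm.fv_substC_subset ht A).trans <| by
    simpa [Finset.erase_eq_empty_iff, ← Finset.subset_singleton_iff] using hA

end ClosedSubstitution

lemma numeral_fv (n : ℕ) : (numeral n).fv = ∅ := by
  induction n with
  | zero => rfl
  | succ k ih =>
    show Finset.univ.biUnion (fun i : Fin 1 => (![numeral k] i).fv) = ∅
    simp [ih]

lemma numeral_eval (φ : ℕ → ℕ) (ρ : ℕ → ℕ) (n : ℕ) : (numeral n).eval (stdPAF φ) ρ = n := by
  induction n with
  | zero => rfl
  | succ k ih => exact congrArg Nat.succ ih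

/-- the set of Gödel codes of PA + F formulas true in every standard
model of PA + F is `Π¹₁`-hard: every `Π¹₁` subset of ℕ — i.e. every set of the form
`{ n | ∀ f, A(f, n) }` with `A` arithmetic with a function variable `f`, here
rendered as the formula `A` of PA + F with the uninterpreted function symbol `F`
playing the role of the function variable — many-one reduces to it via
`n ↦ ⌜A(F, n̄)⌝`. -/
theorem stmt17 (code : Fm SigPAF → ℕ) (hcode : Function.Injective code)
    (A : Fm SigPAF) (hA : A.fv ⊆ {0}) (n : ℕ) :
    (∀ (φ : ℕ → ℕ) (ρ : ℕ → ℕ), Sat (stdPAF φ) (update ρ 0 n) A) ↔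
      code (A.substC 0 (numeral n)) ∈
        { m | ∃ B : Fm SigPAF, B.fv = ∅ ∧ m = code B ∧
            ∀ (φ : ℕ → ℕ) (ρ : ℕ → ℕ), Sat (stdPAF φ) ρ B } := by
  have hsat (φ ρ) := sat_substC_iff 0 (numeral n) (stdPAF φ) (numeral_eval φ · n) A ρ
  constructor
  · intro h
    exact ⟨_, Fm.fv_substC_eq_empty (numeral_fv n) hA, rfl, fun φ ρ => (hsat φ ρ).mpr (h φ ρ)⟩
  · rintro ⟨B, -, hcodeB, hB⟩ φ ρ
    exact (hsat φ ρ).mp (hcode hcodeB ▸ hB φ ρ)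
end
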